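/- On the elliptic curve E : y^2 = x^3 + 117128 x^2 - 562477703744 x - 319768190447349248 over Q, the point P = (3630968, 6859484192) is a rational point of order exactly 5. -/

import Mathlib

open WeierstrassCurve.Affine

/-- The elliptic curve `E : y² = x³ + 117128x² - 562477703744x - 319768190447349248` over `ℚ`. -/
noncomputable def E : WeierstrassCurve.Affine ℚ :=
  { a₁ := 0, a₂ := 117128, a₃ := 0, a₄ := -562477703744, a₆ := -319768190447349248 }

/-!
Doubling by the tangent-line formulas gives `2P = Q := (1054152, 623589472)` (tangent slope 2904)
and `2Q = (3630968, -6859484192) = -P` (tangent slope 2420). Hence `5P = 2(2P) + P = 0`, and as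
`P ≠ 0` and `5` is prime, `P` has order exactly `5`.
-/

namespace WeierstrassCurve.Affine.Point

lemma some_eq_some {R : Type*} [CommRing R] {W : WeierstrassCurve.Affine R} {x y x' y' : R}
    {h : W.Nonsingular x y} {h' : W.Nonsingular x' y'}
    (hx : x = x') (hy : y = y') : some _ _ h = some _ _ h' := by
  subst hx hy
  rfl

/-- Doubling with the tangent slope `ℓ` given implicitly, so that no division has to be evaluated. -/
lemma two_nsmul_some_of_tangent {F : Type*} [Field F] [DecidableEq F]
    {W : WeierstrassCurve.Affine F} {x y ℓ x' y' : F} {h : W.Nonsingular x y}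
    {h' : W.Nonsingular x' y'} (hy : y ≠ W.negY x y)
    (hℓ : ℓ * (y - W.negY x y) = 3 * x ^ 2 + 2 * W.a₂ * x + W.a₄ - W.a₁ * y)
    (hx' : W.addX x x ℓ = x') (hy' : W.addY x x y ℓ = y') :
    2 • some _ _ h = some _ _ h' := by
  have hslope : W.slope x x y y = ℓ := by
    rw [slope_of_Y_ne rfl hy, div_eq_iff (sub_ne_zero.mpr hy), hℓ]
  rw [two_nsmul, add_self_of_Y_ne hy]
  exact some_eq_some (hslope ▸ hx') (hslope ▸ hy')

end WeierstrassCurve.Affine.Point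

lemma E_Δ_ne_zero : E.Δ ≠ 0 := by
  norm_num [E, WeierstrassCurve.Δ, WeierstrassCurve.b₂, WeierstrassCurve.b₄,
    WeierstrassCurve.b₆, WeierstrassCurve.b₈]

lemma E_nonsingular_of_equation {x y : ℚ} (h : E.Equation x y) : E.Nonsingular x y :=
  (equation_iff_nonsingular_of_Δ_ne_zero E_Δ_ne_zero).mp h

lemma E_nonsingular_P : E.Nonsingular 3630968 6859484192 :=
  E_nonsingular_of_equation <| by rw [equation_iff]; norm_num [E]

lemma E_nonsingular_Q : E.Nonsingular 1054152 623589472 :=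
  E_nonsingular_of_equation <| by rw [equation_iff]; norm_num [E]

lemma two_nsmul_P :
    2 • Point.some _ _ E_nonsingular_P = Point.some _ _ E_nonsingular_Q :=
  Point.two_nsmul_some_of_tangent (ℓ := 2904) (by norm_num [E]) (by norm_num [E])
    (by norm_num [E]) (by norm_num [E, addY])

lemma two_nsmul_Q :
    2 • Point.some _ _ E_nonsingular_Q = -Point.some _ _ E_nonsingular_P :=
  Point.two_nsmul_some_of_tangent (ℓ := 2420) (by norm_num [E]) (by norm_num [E])
    (by norm_num [E]) (by norm_num [E, addY])

theorem P_has_order_five :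
    ∃ h : E.Nonsingular 3630968 6859484192, addOrderOf (Point.some _ _ h) = 5 := by
  refine ⟨E_nonsingular_P, ?_⟩
  set P := Point.some _ _ E_nonsingular_P
  have h5 : 5 • P = 0 := by
    calc 5 • P = 2 • 2 • P + P := by abel
      _ = 0 := by rw [two_nsmul_P, two_nsmul_Q, neg_add_cancel]
  have : Fact (Nat.Prime 5) := ⟨by norm_num⟩
  exact addOrderOf_eq_prime h5 (Point.some_ne_zero _)
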